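/- arXiv:2402.14578 — 2 statements merged into one kernel-verified Lean document; each statement's English description precedes it below -/
import Mathlib

section
/- In the setting of the MultiVAW analysis, suppose additionally Λ_{t-1} ⪯ Λ_t (i.e. Λ_t − Λ_{t-1} is positive semidefinite). Then for every t ∈ [T]: ‖X_tθ_t − y_t‖₂² + L̃_{t-1}(θ̃_t) − L̃_t(θ̃_{t+1}) ≤ y_tᵀ X_t A_t^{-1} X_tᵀ y_t. -/
/-!
The Fenchel bound `uᵀA⁻¹u ≥ 2 u·v − vᵀAv` for positive definite `A`, evaluated at
`v = A_t⁻¹ b_{t-1}`, gives `b_{t-1}ᵀA_{t-1}⁻¹b_{t-1} ≥ b_{t-1}ᵀA_t⁻¹b_{t-1} + vᵀ(A_t − A_{t-1})v`,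
and `A_t − A_{t-1} = (Λ_t − Λ_{t-1}) + X_tᵀX_t ⪰ X_tᵀX_t`. Each of `L̃_{t-1}(θ̃_t)` and
`L̃_t(θ̃_{t+1})` is the minimum `∑‖y_s‖² − bᵀA⁻¹b` of a ridge loss; writing
`b_t = b_{t-1} + X_tᵀy_t` and expanding everything in `v = θ_t`, the claim reduces to that bound.
-/

open Matrix Finset

namespace Matrix

variable {n : Type*} [Fintype n]

theorem IsSymm.dotProduct_mulVec_comm {M : Matrix n n ℝ} (hM : M.IsSymm) (u v : n → ℝ) :
    u ⬝ᵥ M *ᵥ v = v ⬝ᵥ M *ᵥ u := by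
  rw [dotProduct_mulVec, ← mulVec_transpose, hM.eq, dotProduct_comm]

theorem IsSymm.add_dotProduct_mulVec_add {M : Matrix n n ℝ} (hM : M.IsSymm) (u v : n → ℝ) :
    (u + v) ⬝ᵥ M *ᵥ (u + v) = u ⬝ᵥ M *ᵥ u + 2 * (v ⬝ᵥ M *ᵥ u) + v ⬝ᵥ M *ᵥ v := by
  rw [mulVec_add, dotProduct_add, add_dotProduct, add_dotProduct, hM.dotProduct_mulVec_comm u v]
  ring

theorem dotProduct_mul_mul_transpose_mulVec {p : Type*} [Fintype p] (X : Matrix p n ℝ)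
    (M : Matrix n n ℝ) (y : p → ℝ) :
    y ⬝ᵥ (X * M * Xᵀ) *ᵥ y = (Xᵀ *ᵥ y) ⬝ᵥ M *ᵥ (Xᵀ *ᵥ y) := by
  rw [← mulVec_mulVec, ← mulVec_mulVec, dotProduct_mulVec, mulVec_transpose]

theorem sum_sq_mulVec_sub {p : Type*} [Fintype p] (X : Matrix p n ℝ) (y : p → ℝ) (v : n → ℝ) :
    ∑ i, (X *ᵥ v - y) i ^ 2 = v ⬝ᵥ (Xᵀ * X) *ᵥ v - 2 * ((Xᵀ *ᵥ y) ⬝ᵥ v) + y ⬝ᵥ y := by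
  have hsq : ∑ i, (X *ᵥ v - y) i ^ 2 = (X *ᵥ v - y) ⬝ᵥ (X *ᵥ v - y) := by
    simp only [dotProduct, sq]
  rw [hsq, ← mulVec_mulVec, dotProduct_mulVec v, ← mulVec_transpose, transpose_transpose,
    mulVec_transpose, ← dotProduct_mulVec]
  simp only [sub_dotProduct, dotProduct_sub, dotProduct_comm y (X *ᵥ v)]
  ring

theorem PosDef.add_sum_transpose_mul_self {ι : Type*} {m : ι → Type*} [∀ s, Fintype (m s)]
    {Λ : Matrix n n ℝ} (hΛ : Λ.PosDef) (S : Finset ι) (X : ∀ s, Matrix (m s) n ℝ) :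
    (Λ + ∑ s ∈ S, (X s)ᵀ * X s).PosDef :=
  hΛ.add_posSemidef <| posSemidef_sum S fun s _ => by
    simpa using posSemidef_conjTranspose_mul_self (X s)

variable [DecidableEq n]

theorem PosDef.two_mul_dotProduct_sub_le {A : Matrix n n ℝ} (hA : A.PosDef) (u v : n → ℝ) :
    2 * (u ⬝ᵥ v) - v ⬝ᵥ A *ᵥ v ≤ u ⬝ᵥ A⁻¹ *ᵥ u := by
  set z := A⁻¹ *ᵥ u
  have hz : A *ᵥ z = u := by
    rw [mulVec_mulVec, mul_nonsing_inv _ ((isUnit_iff_isUnit_det A).mp hA.isUnit), one_mulVec]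
  have hsymm : A.IsSymm := isHermitian_iff_isSymm.mp hA.isHermitian
  have hnonneg := hA.posSemidef.dotProduct_mulVec_nonneg (v - z)
  rw [star_trivial, sub_eq_add_neg, hsymm.add_dotProduct_mulVec_add, neg_dotProduct, neg_dotProduct,
    mulVec_neg, dotProduct_neg, neg_neg, hsymm.dotProduct_mulVec_comm z v, hz, dotProduct_comm v u,
    dotProduct_comm z u] at hnonneg
  linarith

theorem PosDef.inv_dotProduct_mulVec_add_le {A B : Matrix n n ℝ} (hA : A.PosDef)
    (hB : IsUnit B.det) (u : n → ℝ) :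
    u ⬝ᵥ B⁻¹ *ᵥ u + (B⁻¹ *ᵥ u) ⬝ᵥ (B - A) *ᵥ (B⁻¹ *ᵥ u) ≤ u ⬝ᵥ A⁻¹ *ᵥ u := by
  set w := B⁻¹ *ᵥ u
  have hw : B *ᵥ w = u := by rw [mulVec_mulVec, mul_nonsing_inv _ hB, one_mulVec]
  have hfenchel := hA.two_mul_dotProduct_sub_le u w
  rw [sub_mulVec, dotProduct_sub, hw, dotProduct_comm w u]
  linarith

end Matrix

section RidgeLoss

variable {n ι : Type*} [Fintype n] {m : ι → Type*} [∀ s, Fintype (m s)]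

def ridgeLoss (Λ : Matrix n n ℝ) (S : Finset ι) (X : ∀ s, Matrix (m s) n ℝ) (y : ∀ s, m s → ℝ)
    (v : n → ℝ) : ℝ :=
  v ⬝ᵥ Λ *ᵥ v + ∑ s ∈ S, ∑ i, (X s *ᵥ v - y s) i ^ 2

theorem ridgeLoss_eq (Λ : Matrix n n ℝ) (S : Finset ι) (X : ∀ s, Matrix (m s) n ℝ)
    (y : ∀ s, m s → ℝ) (v : n → ℝ) :
    ridgeLoss Λ S X y v = v ⬝ᵥ (Λ + ∑ s ∈ S, (X s)ᵀ * X s) *ᵥ v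
      - 2 * ((∑ s ∈ S, (X s)ᵀ *ᵥ y s) ⬝ᵥ v) + ∑ s ∈ S, y s ⬝ᵥ y s := by
  simp only [ridgeLoss, sum_sq_mulVec_sub, sum_add_distrib, sum_sub_distrib, ← mul_sum,
    add_mulVec, dotProduct_add, sum_mulVec, dotProduct_sum, sum_dotProduct]
  ring

theorem ridgeLoss_inv_mulVec [DecidableEq n] {Λ A : Matrix n n ℝ} {S : Finset ι}
    {X : ∀ s, Matrix (m s) n ℝ} {y : ∀ s, m s → ℝ} {b : n → ℝ}
    (hA : A = Λ + ∑ s ∈ S, (X s)ᵀ * X s) (hb : b = ∑ s ∈ S, (X s)ᵀ *ᵥ y s)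
    (hdet : IsUnit A.det) :
    ridgeLoss Λ S X y (A⁻¹ *ᵥ b) = ∑ s ∈ S, y s ⬝ᵥ y s - b ⬝ᵥ A⁻¹ *ᵥ b := by
  rw [ridgeLoss_eq, ← hA, ← hb, mulVec_mulVec, mul_nonsing_inv _ hdet, one_mulVec,
    dotProduct_comm (A⁻¹ *ᵥ b) b]
  ring

end RidgeLoss

/-- **Per-step upper bound in the MultiVAW analysis.**  In the setting of the
MultiVAW analysis (`A_t = Λ_t + ∑_{s=1}^t XₛᵀXₛ`, `A_0 = Λ_0`,
`b_t = ∑_{s=1}^t Xₛᵀyₛ`, `θ_t = A_t⁻¹ b_{t-1}`, `θ̃_t = A_{t-1}⁻¹ b_{t-1}`,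
`L̃_t(θ) = θᵀΛ_tθ + ∑_{s=1}^t ‖Xₛθ − yₛ‖₂²`), if moreover `Λ_{t-1} ⪯ Λ_t`,
then for every `t ∈ [T]`:
`‖X_tθ_t − y_t‖₂² + L̃_{t-1}(θ̃_t) − L̃_t(θ̃_{t+1}) ≤ y_tᵀ X_t A_t⁻¹ X_tᵀ y_t`. -/
theorem multivaw_per_step_bound
    (T d : ℕ) (n : ℕ → ℕ)
    (X : (s : ℕ) → Matrix (Fin (n s)) (Fin d) ℝ)
    (y : (s : ℕ) → Fin (n s) → ℝ)
    (Λ : ℕ → Matrix (Fin d) (Fin d) ℝ)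
    (hΛ : ∀ t ≤ T, (Λ t).PosDef)
    (hΛmono : ∀ t, 1 ≤ t → t ≤ T → (Λ t - Λ (t - 1)).PosSemidef)
    (A : ℕ → Matrix (Fin d) (Fin d) ℝ)
    (hA : ∀ t ≤ T, A t = Λ t + ∑ s ∈ Icc 1 t, (X s)ᵀ * X s)
    (b : ℕ → (Fin d → ℝ))
    (hb : ∀ t ≤ T, b t = ∑ s ∈ Icc 1 t, (X s)ᵀ.mulVec (y s))
    (θ θt : ℕ → (Fin d → ℝ))
    (hθ : ∀ t, 1 ≤ t → t ≤ T → θ t = (A t)⁻¹.mulVec (b (t - 1)))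
    (hθt : ∀ t, 1 ≤ t → t ≤ T + 1 → θt t = (A (t - 1))⁻¹.mulVec (b (t - 1)))
    (L : ℕ → (Fin d → ℝ) → ℝ)
    (hL : ∀ t ≤ T, ∀ v : Fin d → ℝ,
      L t v = v ⬝ᵥ (Λ t).mulVec v + ∑ s ∈ Icc 1 t, ∑ i, ((X s).mulVec v - y s) i ^ 2)
    (t : ℕ) (ht : t ∈ Icc 1 T) :
    (∑ i, ((X t).mulVec (θ t) - y t) i ^ 2) + L (t - 1) (θt t) - L t (θt (t + 1))
      ≤ y t ⬝ᵥ ((X t) * (A t)⁻¹ * (X t)ᵀ).mulVec (y t) := by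
  obtain ⟨k, rfl⟩ : ∃ k, t = k + 1 := Nat.exists_eq_add_one.mpr (mem_Icc.mp ht).1
  have hk : k + 1 ≤ T := (mem_Icc.mp ht).2
  have hA₀ : (A k).PosDef := hA k (by omega) ▸ (hΛ k (by omega)).add_sum_transpose_mul_self _ X
  have hA₁ : (A (k + 1)).PosDef := hA (k + 1) hk ▸ (hΛ _ hk).add_sum_transpose_mul_self _ X
  have hdet₀ := (isUnit_iff_isUnit_det _).mp hA₀.isUnit
  have hdet₁ := (isUnit_iff_isUnit_det _).mp hA₁.isUnit
  have hAstep : A (k + 1) - A k = (Λ (k + 1) - Λ k) + (X (k + 1))ᵀ * X (k + 1) := by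
    rw [hA _ hk, hA k (by omega), sum_Icc_succ_top (by omega)]
    abel
  have hbstep : b (k + 1) = b k + (X (k + 1))ᵀ *ᵥ y (k + 1) := by
    rw [hb _ hk, hb k (by omega), sum_Icc_succ_top (by omega)]
  have hL₀ : L k (θt (k + 1)) = ∑ s ∈ Icc 1 k, y s ⬝ᵥ y s - b k ⬝ᵥ (A k)⁻¹ *ᵥ b k := by
    rw [hL k (by omega), hθt _ (by omega) (by omega), Nat.add_sub_cancel]
    exact ridgeLoss_inv_mulVec (hA k (by omega)) (hb k (by omega)) hdet₀
  have hL₁ : L (k + 1) (θt (k + 2)) =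
      ∑ s ∈ Icc 1 (k + 1), y s ⬝ᵥ y s - b (k + 1) ⬝ᵥ (A (k + 1))⁻¹ *ᵥ b (k + 1) := by
    rw [hL _ hk, hθt _ (by omega) (by omega)]
    exact ridgeLoss_inv_mulVec (hA _ hk) (hb _ hk) hdet₁
  have hgain := hA₀.inv_dotProduct_mulVec_add_le hdet₁ (b k)
  have hreg : 0 ≤ ((A (k + 1))⁻¹ *ᵥ b k) ⬝ᵥ (Λ (k + 1) - Λ k) *ᵥ ((A (k + 1))⁻¹ *ᵥ b k) := by
    simpa using (hΛmono _ (by omega) hk).dotProduct_mulVec_nonneg ((A (k + 1))⁻¹ *ᵥ b k)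
  rw [hAstep, add_mulVec, dotProduct_add] at hgain
  have hsymm₁ : (A (k + 1))⁻¹.IsSymm := isHermitian_iff_isSymm.mp hA₁.inv.isHermitian
  rw [hθ _ (by omega) hk, Nat.add_sub_cancel, sum_sq_mulVec_sub, hL₀, hL₁,
    sum_Icc_succ_top (by omega), hbstep, hsymm₁.add_dotProduct_mulVec_add,
    dotProduct_mul_mul_transpose_mulVec]
  linarith
end

section
/- Let X_s ∈ ℝ^{n_s×d} for s = 1,…,T, and let Λ_0, Λ_1, …, Λ_T ∈ ℝ^{d×d} be symmetric matrices with 0 ≺ Λ_0 ⪯ Λ_1 ⪯ ⋯ ⪯ Λ_T. Define A_0 = Λ_0 and A_t = Λ_t + Σ_{s=1}^t X_sᵀX_s for t ≥ 1. Then Σ_{t=1}^T tr( X_t A_t^{-1} X_tᵀ ) ≤ Σ_{i=1}^d log( λ_i(A_T) / λ_i(Λ_0) ), where λ_i(M) denotes the i-th largest eigenvalue of the symmetric matrix M. -/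
/-!
For `B ≻ 0`, `M ⪰ 0` and `A = B + M = Sᴴ S`, whitening with `R = S⁻¹` turns `tr (M A⁻¹)` into
`d - tr D` and `log det A - log det B` into `-log det D` for `D = Rᴴ B R ≻ 0`; so `log x ≤ x - 1`
on the eigenvalues of `D` gives `tr (M A⁻¹) ≤ log det A - log det B`, and `tr (M A⁻¹) ≥ 0` shows
that `log det` is monotone in the Loewner order. Since
`A_t = (A_{t-1} + (Λ_t - Λ_{t-1})) + X_tᵀ X_t`, the `t`-th summand is therefore at most
`log det A_t - log det A_{t-1}`, and the sum telescopes to `log det A_T - log det Λ_0`, a sum of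
logarithms of eigenvalues.
-/

open Matrix Finset

noncomputable section

/-- `μ` lists the eigenvalues of the Hermitian matrix `A` in decreasing order:
`μ i` is the `i`-th largest eigenvalue of `A`. -/
def IsDecrEigSeq {d : ℕ} {A : Matrix (Fin d) (Fin d) ℝ} (hA : A.IsHermitian)
    (μ : Fin d → ℝ) : Prop :=
  Antitone μ ∧ ∃ σ : Equiv.Perm (Fin d), μ = hA.eigenvalues ∘ σ

namespace Matrix

variable {n : Type*} [Fintype n] [DecidableEq n]

lemma PosDef.log_det_eq_sum_log_eigenvalues {A : Matrix n n ℝ} (hA : A.PosDef) :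
    Real.log A.det = ∑ i, Real.log (hA.isHermitian.eigenvalues i) := by
  simp only [hA.isHermitian.det_eq_prod_eigenvalues, RCLike.ofReal_real_eq_id, id]
  exact Real.log_prod fun i _ => (hA.eigenvalues_pos i).ne'

lemma PosDef.log_det_le_trace_sub_card {D : Matrix n n ℝ} (hD : D.PosDef) :
    Real.log D.det ≤ D.trace - Fintype.card n := by
  rw [hD.log_det_eq_sum_log_eigenvalues, hD.isHermitian.trace_eq_sum_eigenvalues]
  calc ∑ i, Real.log (hD.isHermitian.eigenvalues i)
      ≤ ∑ i, (hD.isHermitian.eigenvalues i - 1) :=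
        sum_le_sum fun i _ => Real.log_le_sub_one_of_pos (hD.eigenvalues_pos i)
    _ = _ := by simp [sum_sub_distrib]

open scoped ComplexOrder MatrixOrder in
lemma PosSemidef.exists_eq_conjTranspose_mul_self {𝕜 : Type*} [RCLike 𝕜] {A : Matrix n n 𝕜}
    (hA : A.PosSemidef) : ∃ S : Matrix n n 𝕜, A = Sᴴ * S := by
  refine ⟨CFC.sqrt A, ?_⟩
  rw [(CFC.sqrt_nonneg A).posSemidef.isHermitian.eq, CFC.sqrt_mul_sqrt_self A hA.nonneg]

open scoped ComplexOrder in
lemma PosDef.exists_conjTranspose_mul_mul_eq_one {𝕜 : Type*} [RCLike 𝕜] {A : Matrix n n 𝕜}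
    (hA : A.PosDef) : ∃ R : Matrix n n 𝕜, IsUnit R ∧ Rᴴ * A * R = 1 ∧ A⁻¹ = R * Rᴴ := by
  obtain ⟨S, rfl⟩ := hA.posSemidef.exists_eq_conjTranspose_mul_self
  have hS : IsUnit S.det :=
    isUnit_of_mul_isUnit_right (y := S.det) <| by
      rw [← det_mul]; exact (isUnit_iff_isUnit_det _).mp hA.isUnit
  have hSR : S * S⁻¹ = 1 := mul_nonsing_inv S hS
  refine ⟨S⁻¹, isUnit_nonsing_inv_iff.mpr ((isUnit_iff_isUnit_det S).mpr hS), ?_, ?_⟩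
  · rw [mul_assoc, mul_assoc, hSR, mul_one, ← conjTranspose_mul, hSR, conjTranspose_one]
  · refine inv_eq_left_inv ?_
    rw [mul_assoc, ← mul_assoc S⁻¹ᴴ, ← conjTranspose_mul, hSR, conjTranspose_one, one_mul,
      nonsing_inv_mul S hS]

lemma PosSemidef.trace_mul_nonneg {M N : Matrix n n ℝ} (hM : M.PosSemidef) (hN : N.PosSemidef) :
    0 ≤ (M * N).trace := by
  obtain ⟨S, rfl⟩ := hN.exists_eq_conjTranspose_mul_self
  rw [← mul_assoc, trace_mul_cycle]
  exact (hM.mul_mul_conjTranspose_same S).trace_nonneg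

lemma PosDef.trace_mul_inv_add_le_log_det_sub {B M : Matrix n n ℝ} (hB : B.PosDef)
    (hM : M.PosSemidef) :
    (M * (B + M)⁻¹).trace ≤ Real.log (B + M).det - Real.log B.det := by
  have hA := hB.add_posSemidef hM
  obtain ⟨R, hRu, hRAR, hAinv⟩ := hA.exists_conjTranspose_mul_mul_eq_one
  have hD : (Rᴴ * B * R).PosDef := hB.conjTranspose_mul_mul_same (mulVec_injective_of_isUnit hRu)
  have htr : (M * (B + M)⁻¹).trace = Fintype.card n - (Rᴴ * B * R).trace := by
    rw [hAinv, ← mul_assoc, trace_mul_cycle, ← trace_one, ← trace_sub, ← hRAR]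
    congr 1
    noncomm_ring
  have hdet : (Rᴴ * B * R).det * (B + M).det = B.det := by
    have := congrArg det hRAR
    simp only [det_mul, det_one] at this ⊢
    linear_combination B.det * this
  have := hD.log_det_le_trace_sub_card
  rw [← hdet, Real.log_mul hD.det_pos.ne' hA.det_pos.ne']
  linarith

lemma PosDef.log_det_le_log_det_add {B M : Matrix n n ℝ} (hB : B.PosDef) (hM : M.PosSemidef) :
    Real.log B.det ≤ Real.log (B + M).det := by
  have := hM.trace_mul_nonneg (hB.add_posSemidef hM).inv.posSemidef
  linarith [hB.trace_mul_inv_add_le_log_det_sub hM]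

lemma PosDef.trace_mul_inv_mul_transpose_le_log_det_sub {m : Type*} [Fintype m]
    {B P : Matrix n n ℝ} (hB : B.PosDef) (hP : P.PosSemidef) (X : Matrix m n ℝ) :
    (X * (B + P + Xᵀ * X)⁻¹ * Xᵀ).trace ≤ Real.log (B + P + Xᵀ * X).det - Real.log B.det := by
  have hBP := hB.add_posSemidef hP
  calc _ = (Xᵀ * X * (B + P + Xᵀ * X)⁻¹).trace := trace_mul_cycle ..
    _ ≤ Real.log (B + P + Xᵀ * X).det - Real.log (B + P).det :=
        hBP.trace_mul_inv_add_le_log_det_sub (posSemidef_conjTranspose_mul_self X)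
    _ ≤ _ := sub_le_sub_left (hB.log_det_le_log_det_add hP) _

end Matrix

lemma IsDecrEigSeq.pos {d : ℕ} {A : Matrix (Fin d) (Fin d) ℝ} {hA : A.IsHermitian}
    (hApos : A.PosDef) {μ : Fin d → ℝ} (h : IsDecrEigSeq hA μ) (i : Fin d) : 0 < μ i := by
  obtain ⟨-, σ, rfl⟩ := h
  exact hApos.eigenvalues_pos (σ i)

lemma IsDecrEigSeq.sum_log_eq_log_det {d : ℕ} {A : Matrix (Fin d) (Fin d) ℝ}
    {hA : A.IsHermitian} (hApos : A.PosDef) {μ : Fin d → ℝ} (h : IsDecrEigSeq hA μ) :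
    ∑ i, Real.log (μ i) = Real.log A.det := by
  obtain ⟨-, σ, rfl⟩ := h
  rw [hApos.log_det_eq_sum_log_eigenvalues]
  exact Equiv.sum_comp σ (fun i => Real.log (hA.eigenvalues i))

lemma IsDecrEigSeq.sum_log_div_eq_log_det_sub {d : ℕ} {A B : Matrix (Fin d) (Fin d) ℝ}
    {hA : A.IsHermitian} {hB : B.IsHermitian} (hApos : A.PosDef) (hBpos : B.PosDef)
    {μ ν : Fin d → ℝ} (hμ : IsDecrEigSeq hA μ) (hν : IsDecrEigSeq hB ν) :
    ∑ i, Real.log (μ i / ν i) = Real.log A.det - Real.log B.det := by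
  rw [← hμ.sum_log_eq_log_det hApos, ← hν.sum_log_eq_log_det hBpos, ← sum_sub_distrib]
  exact sum_congr rfl fun i _ =>
    Real.log_div (hμ.pos hApos i).ne' (hν.pos hBpos i).ne'

lemma Finset.sum_Icc_one_eq_sum_range {M : Type*} [AddCommMonoid M] (f : ℕ → M) (T : ℕ) :
    ∑ t ∈ Icc 1 T, f t = ∑ t ∈ range T, f (t + 1) := by
  rw [range_eq_Ico, sum_Ico_add' f 0 T 1, zero_add, Ico_add_one_right_eq_Icc]

theorem multivaw_trace_telescoping_bound_general
    (T d : ℕ) (n : ℕ → ℕ)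
    (X : (s : ℕ) → Matrix (Fin (n s)) (Fin d) ℝ)
    (Λ : ℕ → Matrix (Fin d) (Fin d) ℝ)
    (hΛ0pos : (Λ 0).PosDef)
    (hΛmono : ∀ t, t + 1 ≤ T → (Λ (t + 1) - Λ t).PosSemidef)
    (A : ℕ → Matrix (Fin d) (Fin d) ℝ)
    (hA : ∀ t ≤ T, A t = Λ t + ∑ s ∈ Icc 1 t, (X s)ᵀ * X s)
    (hAT : (A T).IsHermitian)
    (μA μΛ : Fin d → ℝ)
    (hμA : IsDecrEigSeq hAT μA)
    (hμΛ : IsDecrEigSeq hΛ0pos.isHermitian μΛ) :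
    ∑ t ∈ Icc 1 T, ((X t) * (A t)⁻¹ * (X t)ᵀ).trace
      ≤ ∑ i, Real.log (μA i / μΛ i) := by
  have hA0 : A 0 = Λ 0 := by simp [hA 0 (Nat.zero_le T)]
  have hsplit (t : ℕ) (ht : t < T) :
      A (t + 1) = A t + (Λ (t + 1) - Λ t) + (X (t + 1))ᵀ * X (t + 1) := by
    rw [hA _ ht, hA t ht.le, sum_Icc_succ_top (Nat.le_add_left 1 t)]
    abel
  have hApos (t : ℕ) (ht : t ≤ T) : (A t).PosDef := by
    induction t with
    | zero => exact hA0 ▸ hΛ0pos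
    | succ t ih =>
      rw [hsplit t ht]
      exact ((ih (by omega)).add_posSemidef (hΛmono t ht)).add_posSemidef
        (posSemidef_conjTranspose_mul_self _)
  calc ∑ t ∈ Icc 1 T, (X t * (A t)⁻¹ * (X t)ᵀ).trace
      = ∑ t ∈ range T, (X (t + 1) * (A (t + 1))⁻¹ * (X (t + 1))ᵀ).trace :=
        sum_Icc_one_eq_sum_range (fun t => (X t * (A t)⁻¹ * (X t)ᵀ).trace) T
    _ ≤ ∑ t ∈ range T, (Real.log (A (t + 1)).det - Real.log (A t).det) := by
        refine sum_le_sum fun t ht => ?_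
        have ht := mem_range.mp ht
        rw [hsplit t ht]
        exact (hApos t ht.le).trace_mul_inv_mul_transpose_le_log_det_sub (hΛmono t ht) _
    _ = Real.log (A T).det - Real.log (Λ 0).det := by
        rw [sum_range_sub (fun t => Real.log (A t).det), hA0]
    _ = ∑ i, Real.log (μA i / μΛ i) :=
        (hμA.sum_log_div_eq_log_det_sub (hApos T le_rfl) hΛ0pos hμΛ).symm

/-- **Telescoping trace bound.**  For symmetric `0 ≺ Λ_0 ⪯ Λ_1 ⪯ ⋯ ⪯ Λ_T`
and `A_t = Λ_t + ∑_{s=1}^t XₛᵀXₛ` (`A_0 = Λ_0`):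
`∑_{t=1}^T tr(X_t A_t⁻¹ X_tᵀ) ≤ ∑_{i=1}^d log (λ_i(A_T)/λ_i(Λ_0))`,
with eigenvalues in decreasing order. -/
theorem multivaw_trace_telescoping_bound
    (T d : ℕ) (n : ℕ → ℕ)
    (X : (s : ℕ) → Matrix (Fin (n s)) (Fin d) ℝ)
    (Λ : ℕ → Matrix (Fin d) (Fin d) ℝ)
    (hΛsymm : ∀ t ≤ T, (Λ t).IsHermitian)
    (hΛ0pos : (Λ 0).PosDef)
    (hΛmono : ∀ t, t + 1 ≤ T → (Λ (t + 1) - Λ t).PosSemidef)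
    (A : ℕ → Matrix (Fin d) (Fin d) ℝ)
    (hA : ∀ t ≤ T, A t = Λ t + ∑ s ∈ Icc 1 t, (X s)ᵀ * X s)
    (hAT : (A T).IsHermitian)
    (μA μΛ : Fin d → ℝ)
    (hμA : IsDecrEigSeq hAT μA)
    (hμΛ : IsDecrEigSeq hΛ0pos.isHermitian μΛ) :
    ∑ t ∈ Icc 1 T, ((X t) * (A t)⁻¹ * (X t)ᵀ).trace
      ≤ ∑ i, Real.log (μA i / μΛ i) :=
  multivaw_trace_telescoping_bound_general T d n X Λ hΛ0pos hΛmono A hA hAT μA μΛ hμA hμΛ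
end
end
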